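/- arXiv:1306.5899 — 2 statements merged into one kernel-verified Lean document; each statement's English description precedes it below -/
import Mathlib

section
/- Let u ≥ 2 be a real number, m ∈ ℝ, and G ~ N(0,1). Then there is a constant D depending only on u such that Var(|G + m|^u) ≤ D · (1 + |m|^{2u−2}). -/
open MeasureTheory ProbabilityTheory Real Set

/-!
The variance is at most the mean square deviation from any constant; take the constant `|m|^u`.
By the mean value theorem, `||G + m|^u - |m|^u| ≤ u (|G| + 2|m|)^(u-1) |G|`, and splitting
`(|G| + 2|m|)^(2u-2)` bounds the square of this by a multiple of
`(1 + |m|^(2u-2)) (|G|^(2u) + G^2)`, whose expectation is finite since Gaussians have all moments.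
-/

lemma abs_rpow_sub_rpow_le {a b u : ℝ} (ha : 0 ≤ a) (hb : 0 ≤ b) (hu : 1 ≤ u) :
    |a ^ u - b ^ u| ≤ u * (a + b) ^ (u - 1) * |a - b| := by
  have hderiv : ∀ x ∈ Icc 0 (a + b),
      HasDerivWithinAt (fun x : ℝ => x ^ u) (u * x ^ (u - 1)) (Icc 0 (a + b)) x :=
    fun x _ => (hasDerivAt_rpow_const (Or.inr hu)).hasDerivWithinAt
  have hbound : ∀ x ∈ Icc 0 (a + b), ‖u * x ^ (u - 1)‖ ≤ u * (a + b) ^ (u - 1) := by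
    rintro x ⟨hx0, hxab⟩
    rw [norm_of_nonneg (by positivity)]
    gcongr
  simpa only [norm_eq_abs] using (convex_Icc 0 (a + b)).norm_image_sub_le_of_norm_hasDerivWithin_le
    hderiv hbound ⟨hb, le_add_of_nonneg_left ha⟩ ⟨ha, le_add_of_nonneg_right hb⟩

lemma add_rpow_le_two_rpow_mul_rpow_add_rpow {a b p : ℝ} (ha : 0 ≤ a) (hb : 0 ≤ b)
    (hp : 0 ≤ p) : (a + b) ^ p ≤ 2 ^ p * (a ^ p + b ^ p) := by
  have hmax : max a b ^ p ≤ a ^ p + b ^ p := by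
    rcases max_choice a b with h | h <;> rw [h]
    · exact le_add_of_nonneg_right (rpow_nonneg hb p)
    · exact le_add_of_nonneg_left (rpow_nonneg ha p)
  calc (a + b) ^ p ≤ (2 * max a b) ^ p := by
        gcongr
        linarith [le_max_left a b, le_max_right a b]
    _ = 2 ^ p * max a b ^ p := mul_rpow zero_le_two (le_max_of_le_left ha)
    _ ≤ 2 ^ p * (a ^ p + b ^ p) := by gcongr

lemma variance_le_integral_sub_sq {Ω : Type*} [MeasurableSpace Ω] {μ : Measure Ω}
    [IsProbabilityMeasure μ] {X : Ω → ℝ} (hX : AEStronglyMeasurable X μ) (c : ℝ) :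
    variance X μ ≤ ∫ ω, (X ω - c) ^ 2 ∂μ := by
  rw [← variance_sub_const hX c]
  exact variance_le_expectation_sq (hX.sub aestronglyMeasurable_const)

lemma sq_abs_add_rpow_sub_abs_rpow_le {u : ℝ} (hu : 1 ≤ u) (g m : ℝ) :
    (|g + m| ^ u - |m| ^ u) ^ 2
      ≤ u ^ 2 * 4 ^ (2 * u - 2) * (1 + |m| ^ (2 * u - 2)) * (|g| ^ (2 * u) + g ^ 2) := by
  set p := 2 * u - 2
  have hp : 0 ≤ p := by linarith
  have hlip : |(|g + m| ^ u - |m| ^ u)| ≤ u * (|g| + 2 * |m|) ^ (u - 1) * |g| :=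
    calc |(|g + m| ^ u - |m| ^ u)| ≤ u * (|g + m| + |m|) ^ (u - 1) * |(|g + m| - |m|)| :=
          abs_rpow_sub_rpow_le (abs_nonneg _) (abs_nonneg _) hu
      _ ≤ u * (|g| + 2 * |m|) ^ (u - 1) * |g| := by
          gcongr u * ?_ ^ _ * ?_
          · linarith [abs_add_le g m]
          · simpa using abs_abs_sub_abs_le_abs_sub (g + m) m
  have hsq : ((|g| + 2 * |m|) ^ (u - 1)) ^ 2 = (|g| + 2 * |m|) ^ p := by
    rw [← rpow_natCast, ← rpow_mul (by positivity)]
    congr 1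
    ring
  have hsplit : (|g| + 2 * |m|) ^ p ≤ 4 ^ p * (|g| ^ p + |m| ^ p) :=
    calc (|g| + 2 * |m|) ^ p ≤ 2 ^ p * (|g| ^ p + (2 * |m|) ^ p) :=
          add_rpow_le_two_rpow_mul_rpow_add_rpow (abs_nonneg _) (by positivity) hp
      _ = 2 ^ p * |g| ^ p + 4 ^ p * |m| ^ p := by
          rw [mul_rpow zero_le_two (abs_nonneg _), show (4 : ℝ) = 2 * 2 by norm_num,
            mul_rpow zero_le_two zero_le_two]
          ring
      _ ≤ 4 ^ p * (|g| ^ p + |m| ^ p) := by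
          have : (2 : ℝ) ^ p ≤ 4 ^ p := by gcongr; norm_num
          nlinarith [rpow_nonneg (abs_nonneg g) p]
  have hpow : |g| ^ p * g ^ 2 = |g| ^ (2 * u) := by
    rw [← sq_abs, ← rpow_natCast, ← rpow_add' (abs_nonneg g) (by norm_num; linarith)]
    congr 1
    ring
  calc (|g + m| ^ u - |m| ^ u) ^ 2 = |(|g + m| ^ u - |m| ^ u)| ^ 2 := (sq_abs _).symm
    _ ≤ (u * (|g| + 2 * |m|) ^ (u - 1) * |g|) ^ 2 := by gcongr
    _ = u ^ 2 * (|g| + 2 * |m|) ^ p * g ^ 2 := by rw [mul_pow, mul_pow, hsq, sq_abs]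
    _ ≤ u ^ 2 * (4 ^ p * (|g| ^ p + |m| ^ p)) * g ^ 2 := by gcongr
    _ = u ^ 2 * 4 ^ p * (|g| ^ (2 * u) + |m| ^ p * g ^ 2) := by rw [← hpow]; ring
    _ ≤ u ^ 2 * 4 ^ p * (1 + |m| ^ p) * (|g| ^ (2 * u) + g ^ 2) := by
      rw [mul_assoc _ (1 + _)]
      gcongr
      nlinarith [rpow_nonneg (abs_nonneg m) p, rpow_nonneg (abs_nonneg g) (2 * u), sq_nonneg g,
        mul_nonneg (rpow_nonneg (abs_nonneg m) p) (rpow_nonneg (abs_nonneg g) (2 * u))]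

/-- For real `u ≥ 2` there is a constant `D` depending only on `u` such that for every
`m ∈ ℝ` and `G` standard Gaussian, `Var(|G + m|^u) ≤ D (1 + |m|^{2u-2})`. -/
theorem stmt_3 (u : ℝ) (hu : 2 ≤ u) :
    ∃ D : ℝ, 0 < D ∧ ∀ m : ℝ,
      variance (fun g : ℝ => |g + m| ^ u) (gaussianReal 0 1)
        ≤ D * (1 + |m| ^ (2 * u - 2)) := by
  set ν := gaussianReal 0 1
  have hmoment : Integrable (fun g : ℝ => |g| ^ (2 * u)) ν := by
    simpa [show (0 : ℝ) ≤ 2 * u by linarith] using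
      (memLp_id_gaussianReal (μ := 0) (v := 1) (2 * u).toNNReal).integrable_norm_rpow'
  have hsq : Integrable (fun g : ℝ => g ^ 2) ν := (memLp_id_gaussianReal 2).integrable_sq
  have hsecond : ∫ g, g ^ 2 ∂ν = 1 := by
    simpa using (variance_of_integral_eq_zero aemeasurable_id integral_id_gaussianReal
      (μ := gaussianReal 0 1)).symm
  set M := ∫ g, |g| ^ (2 * u) ∂ν
  have hM : 0 ≤ M := integral_nonneg fun g => rpow_nonneg (abs_nonneg g) _
  refine ⟨u ^ 2 * 4 ^ (2 * u - 2) * (M + 1), by positivity, fun m => ?_⟩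
  calc variance (fun g : ℝ => |g + m| ^ u) ν ≤ ∫ g, (|g + m| ^ u - |m| ^ u) ^ 2 ∂ν :=
        variance_le_integral_sub_sq (by fun_prop (disch := linarith)) _
    _ ≤ ∫ g, u ^ 2 * 4 ^ (2 * u - 2) * (1 + |m| ^ (2 * u - 2)) * (|g| ^ (2 * u) + g ^ 2) ∂ν :=
        integral_mono_of_nonneg (ae_of_all _ fun _ => sq_nonneg _)
          ((hmoment.add hsq).const_mul _)
          (ae_of_all _ fun g => sq_abs_add_rpow_sub_abs_rpow_le (by linarith) g m)
    _ = u ^ 2 * 4 ^ (2 * u - 2) * (M + 1) * (1 + |m| ^ (2 * u - 2)) := by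
        rw [integral_const_mul, integral_add hmoment hsq, hsecond]
        ring
end

section
/- Let (G_{l,k}) for 0 ≤ l ≤ j, k ∈ Z_l with |Z_l| ≤ c·2^l, be independent standard Gaussian random variables, and let (ψ_{l,k}) be a wavelet system satisfying Σ_{l≤j,k} ψ_{l,k}(x)² ≤ C_p² 2^j for all x and ∫|ψ_{l,k}(x)|^p dx ≤ C_p^p 2^{lp(1/2−1/p)}. Then for p ≥ 2, E[ ∫₀¹ |Σ_{l≤j,k} n^{−1/2} G_{l,k} ψ_{l,k}(x)|^p dx ] ≤ D_p^p · 2^{jp/2}/n^{p/2} for a constant D_p depending only on p. -/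
/-!
For fixed `x`, the variable `∑ n^{-1/2} G_{l,k} ψ_{l,k}(x)` is a linear combination of independent
standard Gaussians, hence centred Gaussian with variance `n⁻¹ ∑ ψ_{l,k}(x)² ≤ C_p² 2^j / n`. Its
`p`-th absolute moment is therefore at most `(C_p² 2^j / n)^{p/2} E|N(0,1)|^p`, uniformly in `x`,
and integrating over `x ∈ [0,1]` (Tonelli) gives the bound with `D_p = C_p (E|N(0,1)|^p)^{1/p}`.
-/

open MeasureTheory ProbabilityTheory Finset
open scoped NNReal ENNReal

noncomputable def gaussianAbsMoment (p : ℝ) : ℝ := ∫ x, |x| ^ p ∂gaussianReal 0 1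

lemma integrable_abs_rpow_gaussianReal {p : ℝ} (hp : 0 ≤ p) :
    Integrable (fun x ↦ |x| ^ p) (gaussianReal 0 1) := by
  simpa [ENNReal.toReal_ofReal hp] using (memLp_id_gaussianReal' (μ := 0) (v := 1)
    (ENNReal.ofReal p) ENNReal.ofReal_ne_top).integrable_norm_rpow'

lemma gaussianAbsMoment_pos {p : ℝ} (hp : 0 ≤ p) : 0 < gaussianAbsMoment p := by
  rw [gaussianAbsMoment, integral_pos_iff_support_of_nonneg (fun x ↦ by positivity)
    (integrable_abs_rpow_gaussianReal hp)]
  have hsupp : {0}ᶜ ⊆ Function.support fun x : ℝ ↦ |x| ^ p := fun x hx ↦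
    (Real.rpow_pos_of_pos (abs_pos.mpr hx) p).ne'
  have := nullSingletonClass_gaussianReal (μ := 0) one_ne_zero
  refine lt_of_lt_of_le ?_ (measure_mono hsupp)
  rw [measure_compl (measurableSet_singleton 0) (measure_ne_top _ _), measure_singleton]
  simp

lemma lintegral_abs_rpow_of_map_eq_gaussianReal {Ω : Type*} {mΩ : MeasurableSpace Ω}
    {μ : Measure Ω} {X : Ω → ℝ} (hX : AEMeasurable X μ) {v : ℝ≥0}
    (h : μ.map X = gaussianReal 0 v) {p : ℝ} (hp : 0 ≤ p) :
    ∫⁻ ω, ENNReal.ofReal (|X ω| ^ p) ∂μ = ENNReal.ofReal (v ^ (p / 2) * gaussianAbsMoment p) := by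
  have hscale : gaussianReal 0 v = (gaussianReal 0 1).map ((NNReal.sqrt v : ℝ) * ·) := by
    rw [gaussianReal_map_const_mul]
    congr 1
    · simp
    · ext; simp
  have hm : Measurable fun x : ℝ ↦ ENNReal.ofReal (|x| ^ p) := by fun_prop
  rw [← lintegral_map' hm.aemeasurable hX, h, hscale, lintegral_map hm (measurable_const_mul _),
    gaussianAbsMoment, ENNReal.ofReal_mul (by positivity),
    ofReal_integral_eq_lintegral_ofReal (integrable_abs_rpow_gaussianReal hp)
      (ae_of_all _ fun x ↦ by positivity), ← lintegral_const_mul _ hm]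
  congr 1 with x
  rw [← ENNReal.ofReal_mul (by positivity), abs_mul, Real.mul_rpow (by positivity) (by positivity),
    NNReal.abs_eq, Real.coe_sqrt, Real.sqrt_eq_rpow, ← Real.rpow_mul v.coe_nonneg,
    one_div_mul_eq_div]

section GaussianLinearCombination

variable {ι Ω : Type*} {mΩ : MeasurableSpace Ω} {μ : Measure Ω} [IsProbabilityMeasure μ]
  {G : ι → Ω → ℝ}

lemma map_sum_mul_eq_gaussianReal (hGm : ∀ i, Measurable (G i)) (hG : iIndepFun G μ)
    (hGd : ∀ i, μ.map (G i) = gaussianReal 0 1) (d : ι → ℝ) (S : Finset ι) :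
    μ.map (fun ω ↦ ∑ i ∈ S, d i * G i ω) = gaussianReal 0 (∑ i ∈ S, ‖d i‖₊ ^ 2) := by
  classical
  induction S using Finset.induction_on with
  | empty => simp [gaussianReal_zero_var]
  | insert a S ha ih =>
    have hlaw : μ.map (fun ω ↦ d a * G a ω) = gaussianReal 0 (‖d a‖₊ ^ 2) := by
      rw [← Function.comp_def (d a * ·), ← Measure.map_map (measurable_const_mul _) (hGm a),
        hGd a, gaussianReal_map_const_mul]
      congr 1
      · simp
      · ext; simp
    have hind : IndepFun (fun ω ↦ d a * G a ω) (fun ω ↦ ∑ i ∈ S, d i * G i ω) μ := by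
      have := (hG.comp (fun i x ↦ d i * x) fun i ↦ measurable_const_mul _)
        |>.indepFun_finsetSum_of_notMem (fun i ↦ (hGm i).const_mul _) ha
      convert this.symm using 1 <;> ext ω <;> simp only [Finset.sum_apply, Function.comp_apply]
    have hsum := gaussianReal_add_gaussianReal_of_indepFun hind hlaw ih
    rw [zero_add] at hsum
    simp_rw [sum_insert ha]
    exact hsum

lemma lintegral_abs_sum_mul_rpow_le (hGm : ∀ i, Measurable (G i)) (hG : iIndepFun G μ)
    (hGd : ∀ i, μ.map (G i) = gaussianReal 0 1) (d : ι → ℝ) (S : Finset ι) {v : ℝ}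
    (hv : ∑ i ∈ S, d i ^ 2 ≤ v) {p : ℝ} (hp : 0 ≤ p) :
    ∫⁻ ω, ENNReal.ofReal (|∑ i ∈ S, d i * G i ω| ^ p) ∂μ
      ≤ ENNReal.ofReal (v ^ (p / 2) * gaussianAbsMoment p) := by
  have hvar : ((∑ i ∈ S, ‖d i‖₊ ^ 2 : ℝ≥0) : ℝ) = ∑ i ∈ S, d i ^ 2 := by simp
  rw [lintegral_abs_rpow_of_map_eq_gaussianReal (by fun_prop)
    (map_sum_mul_eq_gaussianReal hGm hG hGd d S) hp, hvar]
  gcongr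
  exact (gaussianAbsMoment_pos hp).le

lemma lintegral_abs_sum_sum_mul_rpow_le {κ κ' : Type*} {G : κ × κ' → Ω → ℝ}
    (hGm : ∀ i, Measurable (G i)) (hG : iIndepFun G μ)
    (hGd : ∀ i, μ.map (G i) = gaussianReal 0 1) (a : κ → κ' → ℝ) (s : Finset κ)
    (t : κ → Finset κ') {v : ℝ} (hv : ∑ l ∈ s, ∑ k ∈ t l, a l k ^ 2 ≤ v) {p : ℝ} (hp : 0 ≤ p) :
    ∫⁻ ω, ENNReal.ofReal (|∑ l ∈ s, ∑ k ∈ t l, G (l, k) ω * a l k| ^ p) ∂μ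
      ≤ ENNReal.ofReal (v ^ (p / 2) * gaussianAbsMoment p) := by
  rw [sum_sigma' s t fun l k ↦ a l k ^ 2] at hv
  have hsum : ∀ ω, ∑ l ∈ s, ∑ k ∈ t l, G (l, k) ω * a l k
      = ∑ x ∈ s.sigma t, a x.1 x.2 * G (x.1, x.2) ω := fun ω ↦ by
    simp_rw [sum_sigma, mul_comm (G _ _)]
  simp_rw [hsum]
  exact lintegral_abs_sum_mul_rpow_le (G := G ∘ Equiv.sigmaEquivProd κ κ') (fun _ ↦ hGm _)
    (iIndepFun.precomp (g := Equiv.sigmaEquivProd κ κ') (Equiv.injective _) hG) (fun _ ↦ hGd _)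
    (fun x ↦ a x.1 x.2) _ hv hp

end GaussianLinearCombination

lemma integral_integral_le_of_forall_lintegral_le {α β : Type*} [MeasurableSpace α]
    [MeasurableSpace β] {μ : Measure α} {ν : Measure β} [SFinite μ] [IsFiniteMeasure ν]
    {F : α → β → ℝ} (hF : Measurable (Function.uncurry F)) (hF0 : ∀ a b, 0 ≤ F a b) {C : ℝ}
    (hC0 : 0 ≤ C) (hC : ∀ b, ∫⁻ a, ENNReal.ofReal (F a b) ∂μ ≤ ENNReal.ofReal C) :
    ∫ a, ∫ b, F a b ∂ν ∂μ ≤ ν.real Set.univ * C := by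
  have hlint : ∫⁻ a, ENNReal.ofReal (∫ b, F a b ∂ν) ∂μ ≤ ν Set.univ * ENNReal.ofReal C :=
    calc ∫⁻ a, ENNReal.ofReal (∫ b, F a b ∂ν) ∂μ
        ≤ ∫⁻ a, ∫⁻ b, ENNReal.ofReal (F a b) ∂ν ∂μ := by
          refine lintegral_mono fun a ↦ ?_
          rw [integral_eq_lintegral_of_nonneg_ae (ae_of_all _ (hF0 a))
            hF.of_uncurry_left.aestronglyMeasurable]
          exact ENNReal.ofReal_toReal_le
      _ = ∫⁻ b, ∫⁻ a, ENNReal.ofReal (F a b) ∂μ ∂ν :=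
          lintegral_lintegral_swap hF.ennreal_ofReal.aemeasurable
      _ ≤ ∫⁻ _, ENNReal.ofReal C ∂ν := lintegral_mono hC
      _ = ν Set.univ * ENNReal.ofReal C := by rw [lintegral_const, mul_comm]
  rw [integral_eq_lintegral_of_nonneg_ae (ae_of_all _ fun a ↦ integral_nonneg (hF0 a))
    hF.stronglyMeasurable.integral_prod_right.aestronglyMeasurable]
  calc _ ≤ (ν Set.univ * ENNReal.ofReal C).toReal :=
        ENNReal.toReal_mono (by finiteness) hlint
    _ = ν.real Set.univ * C := by rw [ENNReal.toReal_mul, ENNReal.toReal_ofReal hC0]; rfl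

/-- `L_p` risk of a Gaussian wavelet projection: for `p ≥ 2` and a wavelet system
`(ψ_{l,k})_{l ≤ j, k ∈ Z_l}` with `|Z_l| ≤ c 2^l`, satisfying
`∑_{l ≤ j, k} ψ_{l,k}(x)² ≤ C_p² 2^j` for all `x` and
`∫ |ψ_{l,k}|^p ≤ C_p^p 2^{lp(1/2 − 1/p)}`, and independent standard Gaussians
`G_{l,k}`, one has
`E ∫₀¹ |∑_{l ≤ j, k} n^{-1/2} G_{l,k} ψ_{l,k}(x)|^p dx ≤ D_p^p 2^{jp/2} / n^{p/2}`
for a constant `D_p` depending only on `p` (and `C_p`). -/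
theorem stmt_13 (p : ℝ) (hp : 2 ≤ p) (Cp : ℝ) (hCp : 0 < Cp) :
    ∃ D : ℝ, 0 < D ∧
      ∀ (j : ℕ) (c : ℝ) (Z : ℕ → ℕ), (∀ l, (Z l : ℝ) ≤ c * 2 ^ l) →
      ∀ (ψ : ℕ → ℕ → ℝ → ℝ), (∀ l k, Measurable (ψ l k)) →
      (∀ x : ℝ, ∑ l ∈ Finset.range (j + 1), ∑ k ∈ Finset.range (Z l),
          (ψ l k x) ^ 2 ≤ Cp ^ 2 * (2 : ℝ) ^ j) →
      (∀ l k, ∫ x in Set.Icc (0 : ℝ) 1, |ψ l k x| ^ p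
          ≤ Cp ^ p * (2 : ℝ) ^ ((l : ℝ) * p * (1 / 2 - 1 / p))) →
      ∀ (n : ℝ), 0 < n →
      ∀ (Ω : Type) (mΩ : MeasurableSpace Ω) (μ : Measure Ω), IsProbabilityMeasure μ →
      ∀ (G : ℕ × ℕ → Ω → ℝ), (∀ i, Measurable (G i)) →
      iIndepFun G μ →
      (∀ i, Measure.map (G i) μ = gaussianReal 0 1) →
      (∫ ω, (∫ x in Set.Icc (0 : ℝ) 1,
            |∑ l ∈ Finset.range (j + 1), ∑ k ∈ Finset.range (Z l),
              (G (l, k) ω / Real.sqrt n) * ψ l k x| ^ p) ∂μ)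
        ≤ D ^ p * (2 : ℝ) ^ ((j : ℝ) * p / 2) / n ^ (p / 2) := by
  have hp0 : 0 ≤ p := by linarith
  have hm := gaussianAbsMoment_pos hp0
  refine ⟨Cp * gaussianAbsMoment p ^ (1 / p), mul_pos hCp (Real.rpow_pos_of_pos hm _), ?_⟩
  intro j _ Z _ ψ hψm hψsq _ n hn Ω _ μ _ G hGm hGi hGd
  have hpoint : ∀ x, ∫⁻ ω, ENNReal.ofReal
      (|∑ l ∈ range (j + 1), ∑ k ∈ range (Z l), G (l, k) ω / √n * ψ l k x| ^ p) ∂μ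
      ≤ ENNReal.ofReal ((Cp ^ 2 * 2 ^ j / n) ^ (p / 2) * gaussianAbsMoment p) := fun x ↦ by
    have hvar : ∑ l ∈ range (j + 1), ∑ k ∈ range (Z l), (ψ l k x / √n) ^ 2
        ≤ Cp ^ 2 * 2 ^ j / n := by
      simp_rw [div_pow, Real.sq_sqrt hn.le, ← sum_div]
      exact div_le_div_of_nonneg_right (hψsq x) hn.le
    have hterm : ∀ ω l k, G (l, k) ω / √n * ψ l k x = G (l, k) ω * (ψ l k x / √n) :=
      fun _ _ _ ↦ by ring
    simp_rw [hterm]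
    exact lintegral_abs_sum_sum_mul_rpow_le hGm hGi hGd _ _ _ hvar hp0
  calc _ ≤ (volume.restrict (Set.Icc (0 : ℝ) 1)).real Set.univ
        * ((Cp ^ 2 * 2 ^ j / n) ^ (p / 2) * gaussianAbsMoment p) :=
        integral_integral_le_of_forall_lintegral_le (by fun_prop) (fun _ _ ↦ by positivity)
          (by positivity) hpoint
    _ = _ := by
      rw [show (volume.restrict (Set.Icc (0 : ℝ) 1)).real Set.univ = 1 by simp [Measure.real],
        Real.mul_rpow hCp.le (by positivity), ← Real.rpow_mul hm.le,
        one_div_mul_cancel (by linarith), Real.rpow_one, Real.div_rpow (by positivity) hn.le,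
        Real.mul_rpow (by positivity) (by positivity), ← Real.rpow_natCast, ← Real.rpow_natCast,
        ← Real.rpow_mul hCp.le, ← Real.rpow_mul zero_le_two]
      ring_nf
end
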